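/- For every integer partition P of n, there exists a sequence of split steps transforming {n} into P such that each split acts on a part x satisfying 2 ≤ x ≤ ⌊2n/3⌋ or x = n. -/

import Mathlib

/-!
If `P ≠ {n}`, cut `P` into two nonempty blocks `A + B` and split `n` into `A.sum + B.sum`;
it remains to break each block down from its sum, which only ever splits sub-sums of the
block. So it suffices that each block has sum at most `2n/3` or is a single part. If some
part `p` has `3p ≥ n`, take `A = {p}`: the rest sums to at most `2n/3`. Otherwise all parts
are below `n/3`, and adding parts one at a time the running sum enters `[n/3, 2n/3)`.
-/

/-- A split step acting on a part whose value lies in `S`: it replaces one part `x ∈ S`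
of a multiset by two positive parts `a`, `b` with `a + b = x`. -/
def SplitStepIn (S : Set ℕ) (P Q : Multiset ℕ) : Prop :=
  ∃ x a b : ℕ, x ∈ P ∧ x ∈ S ∧ 0 < a ∧ 0 < b ∧ a + b = x ∧ Q = a ::ₘ b ::ₘ P.erase x

namespace SplitStepIn

variable {S : Set ℕ}

theorem add_left (C : Multiset ℕ) {P Q : Multiset ℕ} (h : SplitStepIn S P Q) :
    SplitStepIn S (C + P) (C + Q) := by
  obtain ⟨x, a, b, hxP, hxS, ha, hb, hab, rfl⟩ := h
  refine ⟨x, a, b, Multiset.mem_add.2 (Or.inr hxP), hxS, ha, hb, hab, ?_⟩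
  rw [Multiset.erase_add_right_pos C hxP, Multiset.add_cons, Multiset.add_cons]

theorem reflTransGen_add {A A' B B' : Multiset ℕ}
    (hA : Relation.ReflTransGen (SplitStepIn S) A A')
    (hB : Relation.ReflTransGen (SplitStepIn S) B B') :
    Relation.ReflTransGen (SplitStepIn S) (A + B) (A' + B') :=
  (hA.lift (· + B) fun _ _ h => by simpa only [add_comm _ B] using h.add_left B).trans
    (hB.lift (A' + ·) fun _ _ h => h.add_left A')

theorem reflTransGen_split {a b x : ℕ} (hab : a + b = x) (hx : x ∈ S) (ha : 0 < a) (hb : 0 < b)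
    {A B : Multiset ℕ} (hA : Relation.ReflTransGen (SplitStepIn S) {a} A)
    (hB : Relation.ReflTransGen (SplitStepIn S) {b} B) :
    Relation.ReflTransGen (SplitStepIn S) {x} (A + B) := by
  have hsplit : SplitStepIn S {x} ({a} + {b}) :=
    ⟨x, a, b, Multiset.mem_singleton_self x, hx, ha, hb, hab, by simp⟩
  exact .head hsplit (reflTransGen_add hA hB)

theorem reflTransGen_singleton_sum {P : Multiset ℕ} (hpos : ∀ x ∈ P, 0 < x) (hP : 0 < P.sum)
    (hS : Set.Icc 2 P.sum ⊆ S) : Relation.ReflTransGen (SplitStepIn S) {P.sum} P := by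
  induction P using Multiset.induction_on with
  | empty => simp at hP
  | cons a R ih =>
    obtain rfl | ⟨r, hr⟩ := R.empty_or_exists_mem
    · simpa using Relation.ReflTransGen.refl
    have ha : 0 < a := hpos a (Multiset.mem_cons_self a R)
    have hRpos : ∀ x ∈ R, 0 < x := fun x hx => hpos x (Multiset.mem_cons_of_mem hx)
    have hR : 0 < R.sum := (hRpos r hr).trans_le (Multiset.le_sum_of_mem hr)
    rw [Multiset.sum_cons] at hS ⊢
    rw [← Multiset.singleton_add]
    refine reflTransGen_split rfl (hS ⟨by omega, le_rfl⟩) ha hR .refl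
      (ih hRpos hR ((Set.Icc_subset_Icc_right ?_).trans hS))
    omega

end SplitStepIn

def idpSizes (n : ℕ) : Set ℕ := {x | 2 ≤ x ∧ x ≤ 2 * n / 3} ∪ {n}

theorem reflTransGen_idpSizes_singleton_sum {n : ℕ} {P : Multiset ℕ} (hpos : ∀ x ∈ P, 0 < x)
    (hP : 0 < P.sum) (hsmall : 3 * P.sum ≤ 2 * n) :
    Relation.ReflTransGen (SplitStepIn (idpSizes n)) {P.sum} P :=
  SplitStepIn.reflTransGen_singleton_sum hpos hP
    ((Set.Icc_subset_Icc_right (by omega)).trans Set.subset_union_left)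

theorem Multiset.eq_singleton_of_mem_of_sum_eq {n : ℕ} {P : Multiset ℕ} (hpos : ∀ x ∈ P, 0 < x)
    (hnP : n ∈ P) (hsum : P.sum = n) : P = {n} := by
  rw [← Multiset.cons_erase hnP, Multiset.sum_cons, Nat.add_eq_left,
    Multiset.sum_eq_zero_iff] at hsum
  rw [← Multiset.cons_erase hnP, Multiset.eq_zero_of_forall_notMem fun x hx =>
    (hpos x (Multiset.mem_of_mem_erase hx)).ne' (hsum x hx), Multiset.cons_zero]

theorem Multiset.exists_le_sum_mem_middle_third {n : ℕ} (hn : 0 < n) (P : Multiset ℕ)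
    (hsmall : ∀ p ∈ P, 3 * p < n) (hbig : n ≤ 3 * P.sum) :
    ∃ A ≤ P, n ≤ 3 * A.sum ∧ 3 * A.sum < 2 * n := by
  induction P using Multiset.induction_on with
  | empty => simp at hbig; omega
  | cons p R ih =>
    have hp := hsmall p (Multiset.mem_cons_self p R)
    rw [Multiset.sum_cons] at hbig
    by_cases hR : n ≤ 3 * R.sum
    · obtain ⟨A, hAR, hA⟩ := ih (fun q hq => hsmall q (Multiset.mem_cons_of_mem hq)) hR
      exact ⟨A, hAR.trans (Multiset.le_cons_self R p), hA⟩
    · exact ⟨p ::ₘ R, le_rfl, by rw [Multiset.sum_cons]; omega⟩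

theorem exists_balanced_add_eq_of_notMem {n : ℕ} (hn : 0 < n) {P : Multiset ℕ}
    (hpos : ∀ x ∈ P, 0 < x) (hsum : P.sum = n) (hnP : n ∉ P) :
    ∃ A B, P = A + B ∧ 0 < A.sum ∧ 0 < B.sum ∧
      ((∃ a, A = {a}) ∨ 3 * A.sum ≤ 2 * n) ∧ 3 * B.sum ≤ 2 * n := by
  by_cases hlarge : ∃ p ∈ P, n ≤ 3 * p
  · obtain ⟨p, hpP, hp⟩ := hlarge
    have hPp : P = {p} + P.erase p := by rw [Multiset.singleton_add, Multiset.cons_erase hpP]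
    have hpn : p ≠ n := fun h => hnP (h ▸ hpP)
    have hsum' := hsum
    rw [hPp, Multiset.sum_add, Multiset.sum_singleton] at hsum'
    exact ⟨{p}, P.erase p, hPp, by simpa using hpos p hpP, by omega, .inl ⟨p, rfl⟩, by omega⟩
  · push Not at hlarge
    obtain ⟨A, hAP, hA⟩ := P.exists_le_sum_mem_middle_third hn hlarge (by omega)
    have hPA : P = A + (P - A) := (add_tsub_cancel_of_le hAP).symm
    have hsum' := hsum
    rw [hPA, Multiset.sum_add] at hsum'
    exact ⟨A, P - A, hPA, by omega, by omega, .inr (by omega), by omega⟩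

/-- For every integer partition `P` of `n`, there is a sequence of split steps transforming
`{n}` into `P` in which each split acts on a part `x` with `2 ≤ x ≤ ⌊2n/3⌋` or `x = n`. -/
theorem reachable_with_IDP_sizes (n : ℕ) (hn : 0 < n) (P : Multiset ℕ)
    (hpos : ∀ x ∈ P, 0 < x) (hsum : P.sum = n) :
    Relation.ReflTransGen
      (SplitStepIn ({x : ℕ | 2 ≤ x ∧ x ≤ 2 * n / 3} ∪ {n})) {n} P := by
  by_cases hnP : n ∈ P
  · rw [Multiset.eq_singleton_of_mem_of_sum_eq hpos hnP hsum]
  obtain ⟨A, B, rfl, hA, hB, hAsmall, hBsmall⟩ := exists_balanced_add_eq_of_notMem hn hpos hsum hnP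
  have hApos : ∀ x ∈ A, 0 < x := fun x hx => hpos x (Multiset.mem_add.2 (.inl hx))
  have hBpos : ∀ x ∈ B, 0 < x := fun x hx => hpos x (Multiset.mem_add.2 (.inr hx))
  have hreachA : Relation.ReflTransGen (SplitStepIn (idpSizes n)) {A.sum} A := by
    rcases hAsmall with ⟨a, rfl⟩ | hAsmall
    · simpa using Relation.ReflTransGen.refl
    · exact reflTransGen_idpSizes_singleton_sum hApos hA hAsmall
  exact SplitStepIn.reflTransGen_split (by rw [← Multiset.sum_add, hsum]) (.inr rfl) hA hB
    hreachA (reflTransGen_idpSizes_singleton_sum hBpos hB hBsmall)
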